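/- arXiv:2410.23046 — 2 statements merged into one kernel-verified Lean document; each statement's English description precedes it below -/
import Mathlib

section
/- Let φ'(x) = 1 − π̂_{ŷ_bay(x)}(x) and define E(β) = P(ŷ_bay ≠ ŷ | X ∈ L_β(φ')). Then E(β) = max(0, 1 − P(X ∈ L_{1/2}(φ'))/P(X ∈ L_β(φ'))) whenever P(X ∈ L_β(φ')) > 0; consequently E is zero on (0, 1/2] and nondecreasing on (1/2, 1], with E(1) = P(ŷ_bay ≠ ŷ). -/
/-!
Write `m β` for the probability of the sub-level set `{φ' ≤ β}`. The Bayes and plug-in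
classifiers disagree exactly on `{φ' ≥ 1/2}`, which inside `{φ' ≤ β}` is empty for `β < 1/2`
and, since `{φ' = 1/2}` is null, has probability `m β - m (1/2)` for `β ≥ 1/2`. Hence the
conditional disagreement is `max 0 (1 - m (1/2) / m β)`, and everything else follows from the
monotonicity of `m` and from `m 1 = 1`.
-/

open MeasureTheory Set

namespace MeasureTheory

variable {Ω α : Type*} [MeasurableSpace Ω] {μ : Measure Ω} [LinearOrder α] {f : Ω → α} {t : α}

theorem measureReal_le_eq_measureReal_lt (ht : μ {ω | f ω = t} = 0) :
    μ.real {ω | f ω ≤ t} = μ.real {ω | f ω < t} := by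
  have hsplit : {ω | f ω ≤ t} = {ω | f ω < t} ∪ {ω | f ω = t} := by
    ext ω
    exact le_iff_lt_or_eq (a := f ω) (b := t)
  rw [hsplit]
  exact measureReal_congr (union_ae_eq_left_of_ae_eq_empty (ae_eq_empty.2 ht))

theorem measureReal_le_inter_le_eq_max [IsFiniteMeasure μ] (hlt : MeasurableSet {ω | f ω < t})
    (ht : μ {ω | f ω = t} = 0) (β : α) :
    μ.real ({ω | t ≤ f ω} ∩ {ω | f ω ≤ β}) =
      max 0 (μ.real {ω | f ω ≤ β} - μ.real {ω | f ω ≤ t}) := by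
  rcases le_or_gt t β with htβ | hβt
  · have hdiff : {ω | t ≤ f ω} ∩ {ω | f ω ≤ β} = {ω | f ω ≤ β} \ {ω | f ω < t} := by
      ext ω
      simp only [mem_inter_iff, mem_sdiff, mem_ofPred_eq, not_lt]
      tauto
    have hmono : μ.real {ω | f ω ≤ t} ≤ μ.real {ω | f ω ≤ β} :=
      measureReal_mono fun ω (hω : f ω ≤ t) => hω.trans htβ
    have hsub : {ω | f ω < t} ⊆ {ω | f ω ≤ β} := fun ω (hω : f ω < t) => hω.le.trans htβ
    rw [hdiff, measureReal_sdiff hsub hlt, ← measureReal_le_eq_measureReal_lt ht,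
      max_eq_right (sub_nonneg.2 hmono)]
  · have hempty : {ω | t ≤ f ω} ∩ {ω | f ω ≤ β} = ∅ := by
      ext ω
      simp only [mem_inter_iff, mem_ofPred_eq, mem_empty_iff_false, iff_false, not_and, not_le]
      exact fun htω => hβt.trans_le htω
    have hmono : μ.real {ω | f ω ≤ β} ≤ μ.real {ω | f ω ≤ t} :=
      measureReal_mono fun ω (hω : f ω ≤ β) => hω.trans hβt.le
    rw [hempty, measureReal_empty, max_eq_left (sub_nonpos.2 hmono)]

end MeasureTheory

theorem max_zero_sub_div_self {K : Type*} [Field K] [LinearOrder K] [IsStrictOrderedRing K]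
    {a b : K} (hb : 0 < b) :
    max 0 (b - a) / b = max 0 (1 - a / b) := by
  rw [← max_div_div_right hb.le, zero_div, sub_div, div_self hb.ne']

theorem stmt_3_general {Ω 𝒳 : Type*} [MeasurableSpace Ω] [MeasurableSpace 𝒳]
    (μ : Measure Ω) [IsProbabilityMeasure μ]
    (X : Ω → 𝒳) (hX : Measurable X)
    (ybay yhat : 𝒳 → Fin 2)
    (φ' : 𝒳 → ℝ) (hφ'm : Measurable φ')
    (hφ'range : ∀ x, 0 ≤ φ' x ∧ φ' x ≤ 1)
    (hiff : ∀ x, yhat x ≠ ybay x ↔ (1/2 : ℝ) ≤ φ' x)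
    (hatom : μ (X ⁻¹' {x | φ' x = 1/2}) = 0) :
    let L : ℝ → Set Ω := fun β => X ⁻¹' {x | φ' x ≤ β}
    let E : ℝ → ℝ := fun β =>
      (μ ({ω | ybay (X ω) ≠ yhat (X ω)} ∩ L β)).toReal / (μ (L β)).toReal
    (∀ β, 0 < μ (L β) →
        E β = max 0 (1 - (μ (L (1/2))).toReal / (μ (L β)).toReal))
    ∧ (∀ β, 0 < β → β ≤ 1/2 → 0 < μ (L β) → E β = 0)
    ∧ (∀ β γ, 1/2 < β → β ≤ γ → γ ≤ 1 → 0 < μ (L β) → E β ≤ E γ)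
    ∧ E 1 = (μ {ω | ybay (X ω) ≠ yhat (X ω)}).toReal := by
  intro L E
  have hdisagree : {ω | ybay (X ω) ≠ yhat (X ω)} = {ω | 1/2 ≤ φ' (X ω)} := by
    ext ω
    exact ne_comm.trans (hiff (X ω))
  have hL_mono : ∀ {β γ : ℝ}, β ≤ γ → μ.real (L β) ≤ μ.real (L γ) := fun hβγ =>
    measureReal_mono fun ω (hω : φ' (X ω) ≤ _) => hω.trans hβγ
  have hL_pos : ∀ {β}, 0 < μ (L β) → 0 < μ.real (L β) := fun hβ =>
    ENNReal.toReal_pos hβ.ne' (measure_ne_top μ _)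
  have hE : ∀ β, 0 < μ (L β) →
      E β = max 0 (1 - (μ (L (1/2))).toReal / (μ (L β)).toReal) := by
    intro β hβ
    simp only [E, hdisagree, ← measureReal_def]
    rw [← max_zero_sub_div_self (hL_pos hβ)]
    exact congrArg (· / μ.real (L β))
      (measureReal_le_inter_le_eq_max (f := fun ω => φ' (X ω))
        (hX (measurableSet_lt hφ'm measurable_const)) hatom β)
  refine ⟨hE, fun β _ hβ hpos => ?_, fun β γ _ hβγ _ hpos => ?_, ?_⟩
  · rw [hE β hpos, max_eq_left]
    exact sub_nonpos.2 ((one_le_div (hL_pos hpos)).2 (hL_mono hβ))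
  · have hposγ : 0 < μ (L γ) := hpos.trans_le (measure_mono fun ω hω => le_trans hω hβγ)
    rw [hE β hpos, hE γ hposγ]
    gcongr
    · exact hL_pos hpos
    · exact measure_ne_top μ _
    · exact fun ω hω => le_trans hω hβγ
  · have hL_one : L 1 = univ := eq_univ_of_forall fun ω => (hφ'range (X ω)).2
    simp only [E, hL_one, inter_univ, measure_univ, ENNReal.toReal_one, div_one]

/-- With `φ'(x) = 1 - π̂_{ŷ_bay(x)}(x)` taking values in `[0,1]` and
`E β = P(ŷ_bay ≠ ŷ | X ∈ L_β(φ'))`, one has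
`E β = max 0 (1 - P(X ∈ L_{1/2}(φ')) / P(X ∈ L_β(φ')))` whenever `P(X ∈ L_β(φ')) > 0`;
consequently `E` vanishes on `(0, 1/2]`, is nondecreasing on `(1/2, 1]`, and
`E 1 = P(ŷ_bay ≠ ŷ)`. -/
theorem stmt_3 {Ω 𝒳 : Type*} [MeasurableSpace Ω] [MeasurableSpace 𝒳]
    (μ : Measure Ω) [IsProbabilityMeasure μ]
    (X : Ω → 𝒳) (hX : Measurable X)
    (pihat : 𝒳 → Fin 2 → ℝ) (ybay yhat : 𝒳 → Fin 2)
    (φ' : 𝒳 → ℝ) (hφ'm : Measurable φ')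
    (hφ'def : ∀ x, φ' x = 1 - pihat x (ybay x))
    (hφ'range : ∀ x, 0 ≤ φ' x ∧ φ' x ≤ 1)
    (hiff : ∀ x, yhat x ≠ ybay x ↔ (1/2 : ℝ) ≤ φ' x)
    (hatom : μ (X ⁻¹' {x | φ' x = 1/2}) = 0) :
    let L : ℝ → Set Ω := fun β => X ⁻¹' {x | φ' x ≤ β}
    let E : ℝ → ℝ := fun β =>
      (μ ({ω | ybay (X ω) ≠ yhat (X ω)} ∩ L β)).toReal / (μ (L β)).toReal
    (∀ β, 0 < μ (L β) →
        E β = max 0 (1 - (μ (L (1/2))).toReal / (μ (L β)).toReal))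
    ∧ (∀ β, 0 < β → β ≤ 1/2 → 0 < μ (L β) → E β = 0)
    ∧ (∀ β γ, 1/2 < β → β ≤ γ → γ ≤ 1 → 0 < μ (L β) → E β ≤ E γ)
    ∧ E 1 = (μ {ω | ybay (X ω) ≠ yhat (X ω)}).toReal :=
  stmt_3_general μ X hX ybay yhat φ' hφ'm hφ'range hiff hatom
end

section
/- Let S and S' be i.i.d. real-valued random variables, and V, V' be i.i.d. {0,1}-valued random variables with (S,V) independent of (S',V') and (S,V) distributed as (S',V'). Suppose P(V=1) = 1 − ACC with 0 < ACC < 1, and ties S = S' occur with probability 0. Define G-AUC = P(V = 1 | S ≤ S') and UQ-AUC = P(S < S' | V < V'). Then G-AUC = (1 − ACC)² + 2(1 − UQ-AUC)(1 − ACC)·ACC. -/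
/-!
Swapping the i.i.d. pairs `(S, V)` and `(S', V')` preserves their joint law, so for every label
event `L` in `(V, V')`, `P(L, S ≤ S') + P(L swapped, S < S') = P(L)`. Ties being null, `<` may be
replaced by `≤` there, so a symmetric `L` is halved: `P(S ≤ S') = 1/2` and
`P(V = V' = 1, S ≤ S') = p² / 2` with `p = 1 - ACC`. For `L = {V = 1, V' = 0}` it gives
`P(V = 1, V' = 0, S ≤ S') = p ACC - P(S < S', V = 0, V' = 1) = p ACC (1 - UQ-AUC)`,
as `P(V = 0, V' = 1) = ACC p`. Adding the last two and dividing by `1/2` gives G-AUC.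
-/

open MeasureTheory ProbabilityTheory

namespace ProbabilityTheory.IndepFun

variable {Ω α : Type*} [MeasurableSpace Ω] [MeasurableSpace α] {μ : Measure Ω} {X Y : Ω → α}

theorem identDistrib_prodMk_swap [IsFiniteMeasure μ] (hXY : IndepFun X Y μ)
    (hX : AEMeasurable X μ) (hY : AEMeasurable Y μ) (hid : μ.map X = μ.map Y) :
    IdentDistrib (fun ω => (X ω, Y ω)) (fun ω => (Y ω, X ω)) μ μ where
  aemeasurable_fst := hX.prodMk hY
  aemeasurable_snd := hY.prodMk hX
  map_eq := by
    rw [hXY.map_prod_eq_prod_map_map hX hY, hXY.symm.map_prod_eq_prod_map_map hY hX, hid]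

theorem measureReal_preimage_inter_eq_mul (hXY : IndepFun X Y μ)
    (hid : IdentDistrib X Y μ μ) {B C : Set α} (hB : MeasurableSet B) (hC : MeasurableSet C) :
    μ.real (X ⁻¹' B ∩ Y ⁻¹' C) = μ.real (X ⁻¹' B) * μ.real (X ⁻¹' C) := by
  simp only [Measure.real, hXY.measure_inter_preimage_eq_mul B C hB hC,
    ← hid.measure_mem_eq hC, ENNReal.toReal_mul]

end ProbabilityTheory.IndepFun

theorem measureReal_inter_le_eq_inter_lt {Ω β : Type*} [MeasurableSpace Ω] {μ : Measure Ω}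
    [LinearOrder β] {f g : Ω → β} (hties : μ {ω | f ω = g ω} = 0) (E : Set Ω) :
    μ.real (E ∩ {ω | f ω ≤ g ω}) = μ.real (E ∩ {ω | f ω < g ω}) := by
  have hne : ∀ᵐ ω ∂μ, f ω ≠ g ω := ae_iff.2 (by simpa using hties)
  refine measureReal_congr ((Filter.EventuallyEq.refl _ E).inter (Filter.eventuallyEq_set.2 ?_))
  filter_upwards [hne] with ω hω
  exact ⟨fun h => lt_of_le_of_ne h hω, le_of_lt⟩

section ScoreLabel

variable {Ω : Type*} [MeasurableSpace Ω] {μ : Measure Ω} {S S' : Ω → ℝ} {V V' : Ω → Bool}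

theorem measureReal_inter_le_add_swap_inter_lt [IsFiniteMeasure μ] (hS : Measurable S)
    (hS' : Measurable S')
    (hswap : IdentDistrib (fun ω => ((S ω, V ω), (S' ω, V' ω)))
      (fun ω => ((S' ω, V' ω), (S ω, V ω))) μ μ) (P : Bool → Bool → Prop) :
    μ.real ({ω | P (V ω) (V' ω)} ∩ {ω | S ω ≤ S' ω})
      + μ.real ({ω | P (V' ω) (V ω)} ∩ {ω | S ω < S' ω}) = μ.real {ω | P (V ω) (V' ω)} := by
  have hlabel : Measurable fun q : (ℝ × Bool) × (ℝ × Bool) => (q.1.2, q.2.2) :=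
    measurable_fst.snd.prodMk measurable_snd.snd
  have hswap_lt : μ.real ({ω | P (V ω) (V' ω)} ∩ {ω | S' ω < S ω})
      = μ.real ({ω | P (V' ω) (V ω)} ∩ {ω | S ω < S' ω}) :=
    congrArg ENNReal.toReal <| hswap.measure_mem_eq
      (s := {q | P q.1.2 q.2.2} ∩ {q | q.2.1 < q.1.1})
      ((MeasurableSet.of_discrete (s := {x : Bool × Bool | P x.1 x.2}).preimage hlabel).inter
        (measurableSet_lt measurable_snd.fst measurable_fst.fst))
  rw [← hswap_lt, ← measureReal_inter_add_sdiff (s := {ω | P (V ω) (V' ω)})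
    (measurableSet_le hS hS'), Set.sdiff_eq]
  congr 3
  ext ω
  simp

theorem two_mul_measureReal_inter_le_of_symm [IsFiniteMeasure μ] (hS : Measurable S)
    (hS' : Measurable S')
    (hswap : IdentDistrib (fun ω => ((S ω, V ω), (S' ω, V' ω)))
      (fun ω => ((S' ω, V' ω), (S ω, V ω))) μ μ)
    (hties : μ {ω | S ω = S' ω} = 0) {P : Bool → Bool → Prop} (hP : ∀ a b, P a b ↔ P b a) :
    2 * μ.real ({ω | P (V ω) (V' ω)} ∩ {ω | S ω ≤ S' ω}) = μ.real {ω | P (V ω) (V' ω)} := by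
  have h := measureReal_inter_le_add_swap_inter_lt hS hS' hswap P
  simp only [hP (V' _), ← measureReal_inter_le_eq_inter_lt hties] at h
  linarith

theorem measureReal_le_eq_half [IsProbabilityMeasure μ] (hS : Measurable S)
    (hS' : Measurable S')
    (hswap : IdentDistrib (fun ω => ((S ω, V ω), (S' ω, V' ω)))
      (fun ω => ((S' ω, V' ω), (S ω, V ω))) μ μ)
    (hties : μ {ω | S ω = S' ω} = 0) :
    μ.real {ω | S ω ≤ S' ω} = 1 / 2 := by
  have h := two_mul_measureReal_inter_le_of_symm hS hS' hswap hties
    (P := fun _ _ => True) (fun _ _ => Iff.rfl)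
  simp only [Set.ofPred_true, Set.univ_inter, probReal_univ] at h
  linarith

theorem measureReal_setOf_eq_false [IsProbabilityMeasure μ] (hV : Measurable V) :
    μ.real {ω | V ω = false} = 1 - μ.real {ω | V ω = true} := by
  rw [← probReal_compl_eq_one_sub (s := {ω | V ω = true}) (hV (measurableSet_singleton true))]
  congr 1
  ext
  simp

theorem measureReal_label_inter_eq_add [IsFiniteMeasure μ] (hV' : Measurable V')
    (b : Bool) (E : Set Ω) :
    μ.real ({ω | V ω = b} ∩ E)
      = μ.real ({ω | V ω = b ∧ V' ω = true} ∩ E) + μ.real ({ω | V ω = b ∧ V' ω = false} ∩ E) := by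
  rw [← measureReal_inter_add_sdiff (s := {ω | V ω = b} ∩ E)
    (hV' (measurableSet_singleton true))]
  congr 2 <;> ext ω <;> simp [and_right_comm]

end ScoreLabel

/-- For i.i.d. pairs `(S, V)` and `(S', V')` (score, misclassification indicator)
with `P(V = 1) = 1 - ACC`, `0 < ACC < 1` and no ties in the scores,
`G-AUC = P(V = 1 | S ≤ S')` and `UQ-AUC = P(S < S' | V = 0, V' = 1)` satisfy
`G-AUC = (1 - ACC)² + 2 (1 - UQ-AUC)(1 - ACC) ACC`. -/
theorem stmt_4 {Ω : Type*} [MeasurableSpace Ω]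
    (μ : Measure Ω) [IsProbabilityMeasure μ]
    (S S' : Ω → ℝ) (V V' : Ω → Bool)
    (hS : Measurable S) (hS' : Measurable S')
    (hV : Measurable V) (hV' : Measurable V')
    (hindep : IndepFun (fun ω => (S ω, V ω)) (fun ω => (S' ω, V' ω)) μ)
    (hid : Measure.map (fun ω => (S ω, V ω)) μ = Measure.map (fun ω => (S' ω, V' ω)) μ)
    (ACC : ℝ) (hACC0 : 0 < ACC) (hACC1 : ACC < 1)
    (hACC : (μ {ω | V ω = true}).toReal = 1 - ACC)
    (hties : μ {ω | S ω = S' ω} = 0) :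
    (μ ({ω | V ω = true} ∩ {ω | S ω ≤ S' ω})).toReal / (μ {ω | S ω ≤ S' ω}).toReal
      = (1 - ACC) ^ 2
        + 2 * (1 - (μ ({ω | S ω < S' ω} ∩ {ω | V ω = false ∧ V' ω = true})).toReal
                / (μ {ω | V ω = false ∧ V' ω = true}).toReal)
          * (1 - ACC) * ACC := by
  simp only [← measureReal_def] at hACC ⊢
  have hZ : AEMeasurable (fun ω => (S ω, V ω)) μ := (hS.prodMk hV).aemeasurable
  have hZ' : AEMeasurable (fun ω => (S' ω, V' ω)) μ := (hS'.prodMk hV').aemeasurable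
  have hswap := hindep.identDistrib_prodMk_swap hZ hZ' hid
  have hVid : IdentDistrib V V' μ μ := (IdentDistrib.mk hZ hZ' hid).comp measurable_snd
  have hVindep : IndepFun V V' μ := hindep.comp measurable_snd measurable_snd
  have hfalse : μ.real {ω | V ω = false} = ACC := by
    rw [measureReal_setOf_eq_false hV, hACC]
    ring
  have hhalf := measureReal_le_eq_half hS hS' hswap hties
  have hmul (b b' : Bool) :
      μ.real {ω | V ω = b ∧ V' ω = b'} = μ.real {ω | V ω = b} * μ.real {ω | V ω = b'} :=
    hVindep.measureReal_preimage_inter_eq_mul hVid (measurableSet_singleton b)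
      (measurableSet_singleton b')
  have hTT :
      2 * μ.real ({ω | V ω = true ∧ V' ω = true} ∩ {ω | S ω ≤ S' ω}) = (1 - ACC) ^ 2 := by
    rw [two_mul_measureReal_inter_le_of_symm hS hS' hswap hties
      (P := fun a b => a = true ∧ b = true) fun _ _ => and_comm, hmul, hACC]
    ring
  have hTF : μ.real ({ω | V ω = true ∧ V' ω = false} ∩ {ω | S ω ≤ S' ω})
      + μ.real ({ω | S ω < S' ω} ∩ {ω | V ω = false ∧ V' ω = true}) = (1 - ACC) * ACC := by
    have h := measureReal_inter_le_add_swap_inter_lt hS hS' hswap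
      fun a b => a = true ∧ b = false
    simp only [and_comm (a := V' _ = true)] at h
    rwa [Set.inter_comm {ω | V ω = false ∧ V' ω = true}, hmul, hACC, hfalse] at h
  have hACC' : 1 - ACC ≠ 0 := by linarith
  rw [measureReal_label_inter_eq_add hV', hhalf, hmul, hfalse, hACC]
  field_simp
  linarith
end
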